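/- arXiv:0809.4155 — 9 statements merged into one kernel-verified Lean document; each statement's English description precedes it below -/
import Mathlib

section
/- For a Poisson random variable Q with mean μ > 0 and integers a > 1, r > 1, the recurrence E[1/(Q+a)^r] = (1/μ)(E[1/(Q+a-1)^{r-1}] - (a-1) E[1/(Q+a-1)^r]) holds. -/
lemma poisson_inv_moment_summable (μ c : ℝ) (hμ : 0 < μ) (hc : 1 ≤ c) (r : ℕ) :
    Summable (fun k : ℕ => Real.exp (-μ) * μ ^ k / ((k.factorial : ℝ) * ((k : ℝ) + c) ^ r)) := by
  have hS : Summable (fun k : ℕ => Real.exp (-μ) * (μ ^ k / (k.factorial : ℝ))) :=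
    (Real.summable_pow_div_factorial μ).mul_left _
  refine Summable.of_nonneg_of_le (fun k => by positivity) (fun k => ?_) hS
  have h1 : (1:ℝ) ≤ ((k : ℝ) + c) ^ r := by
    apply one_le_pow₀; have : (0:ℝ) ≤ (k:ℝ) := Nat.cast_nonneg k; linarith
  have hk : (0:ℝ) < (k.factorial : ℝ) := by positivity
  calc Real.exp (-μ) * μ ^ k / ((k.factorial : ℝ) * ((k : ℝ) + c) ^ r)
      ≤ Real.exp (-μ) * μ ^ k / ((k.factorial : ℝ) * 1) := by
        gcongr
      _ = Real.exp (-μ) * (μ ^ k / (k.factorial : ℝ)) := by ring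

/-- Recurrence for higher inverse moments about `-a` of a Poisson variate:
`E[1/(Q+a)^r] = (1/μ)(E[1/(Q+a-1)^{r-1}] - (a-1) E[1/(Q+a-1)^r])` for `a > 1`, `r > 1`. -/
theorem poisson_inv_moment_pow_recurrence (μ : ℝ) (hμ : 0 < μ) (a r : ℕ)
    (ha : 1 < a) (hr : 1 < r) :
    ∑' k : ℕ, Real.exp (-μ) * μ ^ k / ((k.factorial : ℝ) * ((k : ℝ) + (a : ℝ)) ^ r) =
      (1 / μ) *
        ((∑' k : ℕ, Real.exp (-μ) * μ ^ k /
            ((k.factorial : ℝ) * ((k : ℝ) + (a : ℝ) - 1) ^ (r - 1))) -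
          ((a : ℝ) - 1) *
            ∑' k : ℕ, Real.exp (-μ) * μ ^ k /
              ((k.factorial : ℝ) * ((k : ℝ) + (a : ℝ) - 1) ^ r)) := by
  have ha1 : (1:ℝ) < (a:ℝ) := by exact_mod_cast ha
  have hy : (0:ℝ) < (a:ℝ) - 1 := by linarith
  set f : ℕ → ℝ := fun k => Real.exp (-μ) * μ ^ k / ((k.factorial : ℝ) * ((k : ℝ) + (a : ℝ)) ^ r) with hf
  set t1 : ℕ → ℝ := fun k => Real.exp (-μ) * μ ^ k /
      ((k.factorial : ℝ) * ((k : ℝ) + (a : ℝ) - 1) ^ (r - 1)) with ht1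
  set t2 : ℕ → ℝ := fun k => Real.exp (-μ) * μ ^ k /
      ((k.factorial : ℝ) * ((k : ℝ) + (a : ℝ) - 1) ^ r) with ht2
  have hca : (1:ℝ) ≤ (a:ℝ) := le_of_lt ha1
  have ha2 : (2:ℝ) ≤ (a:ℝ) := by exact_mod_cast ha
  have hrw : ∀ k : ℕ, (k : ℝ) + (a : ℝ) - 1 = (k : ℝ) + ((a:ℝ) - 1) := fun k => by ring
  have hF : Summable f := poisson_inv_moment_summable μ (a:ℝ) hμ hca r
  have hS1 : Summable t1 := by
    simp only [ht1, hrw]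
    exact poisson_inv_moment_summable μ ((a:ℝ)-1) hμ (by linarith) (r-1)
  have hS2 : Summable t2 := by
    simp only [ht2, hrw]
    exact poisson_inv_moment_summable μ ((a:ℝ)-1) hμ (by linarith) r
  have key : ∀ k : ℕ, t1 (k+1) - ((a:ℝ)-1) * t2 (k+1) = μ * f k := by
    intro k
    have hx : (0:ℝ) < (k:ℝ) + (a:ℝ) := by positivity
    have hxr : ((k:ℝ) + (a:ℝ)) ^ r = ((k:ℝ) + (a:ℝ)) ^ (r-1) * ((k:ℝ) + (a:ℝ)) := by
      rw [← pow_succ]; congr 1; omega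
    have hfac : ((k+1).factorial : ℝ) = ((k:ℝ)+1) * (k.factorial : ℝ) := by
      rw [Nat.factorial_succ]; push_cast; ring
    simp only [ht1, ht2, hf, hfac]
    push_cast
    have e1 : (k:ℝ) + 1 + (a:ℝ) - 1 = (k:ℝ) + (a:ℝ) := by ring
    rw [e1, hxr]
    have hk : ((k.factorial : ℝ)) ≠ 0 := by positivity
    have hx' : ((k:ℝ) + (a:ℝ)) ^ (r-1) ≠ 0 := by positivity
    field_simp
    ring
  have zero : t1 0 - ((a:ℝ)-1) * t2 0 = 0 := by
    have hyr : ((a:ℝ) - 1) ^ r = ((a:ℝ)-1) ^ (r-1) * ((a:ℝ)-1) := by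
      rw [← pow_succ]; congr 1; omega
    simp only [ht1, ht2]
    push_cast
    rw [show (0:ℝ) + (a:ℝ) - 1 = (a:ℝ) - 1 by ring, hyr]
    have hy' : ((a:ℝ)-1) ^ (r-1) ≠ 0 := by positivity
    field_simp
    ring
  have hG : Summable (fun j => t1 j - ((a:ℝ)-1) * t2 j) := hS1.sub (hS2.mul_left _)
  have main : (∑' k, t1 k) - ((a:ℝ)-1) * (∑' k, t2 k) = μ * ∑' k, f k := by
    rw [← tsum_mul_left, ← Summable.tsum_sub hS1 (hS2.mul_left _)]
    rw [Summable.tsum_eq_zero_add hG]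
    simp only [key, zero, zero_add]
    rw [tsum_mul_left]
  rw [main]
  field_simp
end

section
/- For a Poisson random variable Q with mean μ > 0 and integer a ≥ 1, E[1/(Q+a)] = ((a-1)! (-1)^{a-1} / μ^a) (1 - e^{-μ} + Σ_{j=1}^{a-1} (-μ)^j / j!). -/
/-!
Write `G a = ∑ μ^k / (k! (k + a))`, so that `E[1/(Q+a)] = e^{-μ} G a`. Splitting
`k / (k + a) = 1 - a / (k + a)` in `∑ μ^k k / (k! (k + a))` and shifting the index by one gives
the recurrence `μ G (a + 1) = e^μ - a G a`, started by `μ G 1 = e^μ - 1`. Induction on `a` then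
yields `μ^a G a = (-1)^(a-1) (a-1)! (e^μ ∑_{j<a} (-μ)^j / j! - 1)`.
-/

open Nat Real Finset

section

variable (μ : ℝ)

lemma Real.hasSum_pow_div_factorial : HasSum (fun k : ℕ => μ ^ k / k !) (exp μ) := by
  rw [exp_eq_exp_ℝ]
  exact NormedSpace.expSeries_div_hasSum_exp μ

lemma summable_pow_div_factorial_mul_add {a : ℝ} (ha : 0 < a) :
    Summable fun k : ℕ => μ ^ k / (k ! * (k + a)) := by
  refine ((Real.summable_pow_div_factorial |μ|).div_const a).of_norm_bounded fun k => ?_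
  rw [norm_div, norm_mul, norm_pow, Real.norm_eq_abs, Real.norm_of_nonneg (by positivity),
    Real.norm_of_nonneg (by positivity), div_div]
  gcongr
  exact le_add_of_nonneg_left k.cast_nonneg

lemma mul_tsum_pow_div_factorial_mul_add_one :
    μ * ∑' k : ℕ, μ ^ k / (k ! * (k + 1)) = exp μ - 1 := by
  have hshift : ∀ k : ℕ, μ ^ (k + 1) / (k + 1)! = μ * (μ ^ k / (k ! * (k + 1))) := by
    intro k
    rw [factorial_succ, pow_succ]
    push_cast
    ring
  rw [← tsum_mul_left, ← tsum_congr hshift,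
    ((hasSum_nat_add_iff' 1).mpr (Real.hasSum_pow_div_factorial μ)).tsum_eq]
  simp

lemma mul_tsum_pow_div_factorial_mul_add_add_one {a : ℝ} (ha : 0 < a) :
    μ * ∑' k : ℕ, μ ^ k / (k ! * (k + (a + 1))) =
      exp μ - a * ∑' k : ℕ, μ ^ k / (k ! * (k + a)) := by
  set f : ℕ → ℝ := fun k => (μ ^ k / k !) - a * (μ ^ k / (k ! * (k + a)))
  have hf : HasSum f (exp μ - a * ∑' k : ℕ, μ ^ k / (k ! * (k + a))) :=
    (Real.hasSum_pow_div_factorial μ).sub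
      ((summable_pow_div_factorial_mul_add μ ha).hasSum.mul_left a)
  have hf0 : f 0 = 0 := by simp [f, mul_inv_cancel₀ ha.ne']
  have hshift : ∀ k : ℕ, f (k + 1) = μ * (μ ^ k / (k ! * (k + (a + 1)))) := by
    intro k
    have hk : (k : ℝ) + 1 + a ≠ 0 := by positivity
    simp only [f, factorial_succ, pow_succ]
    push_cast
    field_simp
    ring
  rw [← tsum_mul_left, ← tsum_congr hshift, ((hasSum_nat_add_iff' 1).mpr hf).tsum_eq,
    sum_range_one, hf0, sub_zero]

theorem pow_mul_tsum_pow_div_factorial_mul_add {a : ℕ} (ha : a ≠ 0) :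
    μ ^ a * ∑' k : ℕ, μ ^ k / (k ! * (k + a)) =
      (-1) ^ (a - 1) * (a - 1)! * (exp μ * (∑ j ∈ range a, (-μ) ^ j / j !) - 1) := by
  obtain ⟨n, rfl⟩ := exists_eq_add_one_of_ne_zero ha
  clear ha
  simp only [add_tsub_cancel_right]
  induction n with
  | zero => simpa using mul_tsum_pow_div_factorial_mul_add_one μ
  | succ n ih =>
    have hrec := mul_tsum_pow_div_factorial_mul_add_add_one μ (a := n + 1) (by positivity)
    have hfac : ((n + 1)! : ℝ) = (n + 1) * n ! := by push_cast [factorial_succ]; ring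
    have hsign : (-1) ^ (n + 1) * (n + 1)! * ((-μ) ^ (n + 1) / (n + 1)!) = μ ^ (n + 1) := by
      rw [mul_assoc, mul_div_cancel₀ _ (by positivity), ← mul_pow]
      simp
    simp only [Nat.cast_succ] at ih ⊢
    rw [sum_range_succ]
    linear_combination μ ^ (n + 1) * hrec - (n + 1) * ih - exp μ * hsign
      - (-1) ^ (n + 1) * (exp μ * (∑ j ∈ range (n + 1), (-μ) ^ j / j !) - 1) * hfac

end

/-- Explicit formula for the non-central first inverse moment of a Poisson variate:
`E[1/(Q+a)] = ((a-1)! (-1)^{a-1}/μ^a)(1 - e^{-μ} + Σ_{j=1}^{a-1} (-μ)^j/j!)` for `a ≥ 1`. -/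
theorem poisson_inv_moment_explicit (μ : ℝ) (hμ : 0 < μ) (a : ℕ) (ha : 1 ≤ a) :
    ∑' k : ℕ, Real.exp (-μ) * μ ^ k / ((k.factorial : ℝ) * ((k : ℝ) + (a : ℝ))) =
      (((a - 1).factorial : ℝ) * (-1) ^ (a - 1) / μ ^ a) *
        (1 - Real.exp (-μ) + ∑ j ∈ Finset.Icc 1 (a - 1), (-μ) ^ j / (j.factorial : ℝ)) := by
  have hG := pow_mul_tsum_pow_div_factorial_mul_add μ (a := a) (one_le_iff_ne_zero.mp ha)
  have hrange : ∑ j ∈ range a, (-μ) ^ j / j ! = 1 + ∑ j ∈ Icc 1 (a - 1), (-μ) ^ j / j ! := by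
    have hIco : Ico 1 a = Icc 1 (a - 1) := by ext; simp; omega
    rw [range_eq_Ico, sum_eq_sum_Ico_succ_bot ha, hIco]
    simp
  have hexp : exp (-μ) * exp μ = 1 := by rw [← exp_add, neg_add_cancel, exp_zero]
  rw [hrange] at hG
  have hfactor : ∑' k : ℕ, exp (-μ) * μ ^ k / (k ! * (k + a)) =
      exp (-μ) * ∑' k : ℕ, μ ^ k / (k ! * (k + a)) := by
    simp_rw [mul_div_assoc, tsum_mul_left]
  rw [hfactor, div_mul_eq_mul_div, eq_div_iff (pow_ne_zero a hμ.ne')]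
  linear_combination exp (-μ) * hG
    + (-1) ^ (a - 1) * (a - 1)! * (1 + ∑ j ∈ Icc 1 (a - 1), (-μ) ^ j / j !) * hexp
end

section
/- For a Poisson random variable Q with mean μ > 0 and integer a ≥ 1, E[1/(Q+a)] = ((a-1)! (-1)^a / μ^a) Σ_{k=a}^∞ (-μ)^k / k!. -/
open scoped Nat

lemma exp_tsum' (x : ℝ) : ∑' n : ℕ, x ^ n / (n ! : ℝ) = Real.exp x := by
  rw [Real.exp_eq_exp_ℝ, NormedSpace.exp_eq_tsum_div]

lemma sumF (μ : ℝ) (hμ : 0 < μ) (a : ℕ) (ha : 1 ≤ a) :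
    Summable (fun k : ℕ => μ ^ k / ((k ! : ℝ) * ((k : ℝ) + a))) := by
  refine Summable.of_nonneg_of_le (fun k => ?_) (fun k => ?_) (Real.summable_pow_div_factorial μ)
  · positivity
  · rw [div_le_div_iff₀ (by positivity) (by positivity)]
    have h1 : (1:ℝ) ≤ (k : ℝ) + a := by
      have : (1:ℝ) ≤ (a:ℝ) := by exact_mod_cast ha
      have hk0 : (0:ℝ) ≤ (k:ℝ) := Nat.cast_nonneg k
      linarith
    have hf : (0:ℝ) < (k ! : ℝ) := by positivity
    nlinarith [pow_nonneg hμ.le k, mul_le_mul_of_nonneg_left h1 (mul_nonneg (pow_nonneg hμ.le k) hf.le)]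

lemma sumT (μ : ℝ) (a : ℕ) :
    Summable (fun k : ℕ => (-μ) ^ (k + a) / (((k + a)! : ℝ))) :=
  (summable_nat_add_iff a).mpr (Real.summable_pow_div_factorial (-μ))

-- tail recurrence
lemma tail_rec (μ : ℝ) (a : ℕ) :
    (∑' k : ℕ, (-μ) ^ (k + a) / (((k + a)! : ℝ))) =
      (-μ) ^ a / (a ! : ℝ) + ∑' k : ℕ, (-μ) ^ (k + (a + 1)) / (((k + (a + 1))! : ℝ)) := by
  rw [Summable.tsum_eq_zero_add (sumT μ a)]
  simp only [zero_add]
  congr 1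
  apply tsum_congr
  intro k
  have : k + 1 + a = k + (a + 1) := by omega
  rw [this]

-- base case value
lemma F_one (μ : ℝ) (hμ : 0 < μ) :
    (∑' k : ℕ, μ ^ k / ((k ! : ℝ) * ((k : ℝ) + 1))) = (Real.exp μ - 1) / μ := by
  have h1 : (∑' k : ℕ, μ ^ k / ((k ! : ℝ) * ((k : ℝ) + 1)))
      = ∑' k : ℕ, μ⁻¹ * (μ ^ (k + 1) / ((k + 1)! : ℝ)) := by
    apply tsum_congr
    intro k
    have : (((k + 1)! : ℕ) : ℝ) = ((k : ℝ) + 1) * (k ! : ℝ) := by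
      push_cast [Nat.factorial_succ]; ring
    rw [this, pow_succ]
    have hk : (0:ℝ) < (k ! : ℝ) := by positivity
    field_simp
  rw [h1, tsum_mul_left]
  have h2 : (∑' k : ℕ, μ ^ (k + 1) / (((k + 1)! : ℕ) : ℝ)) = Real.exp μ - 1 := by
    have := Summable.tsum_eq_zero_add (Real.summable_pow_div_factorial μ)
    rw [exp_tsum' μ] at this
    simp only [pow_zero, Nat.factorial_zero] at this
    have h3 : (Real.exp μ) = 1 + ∑' k : ℕ, μ ^ (k + 1) / (((k + 1)! : ℕ) : ℝ) := by
      simpa using this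
    linarith
  rw [h2]
  field_simp

-- recurrence: a * F a + μ * F (a+1) = exp μ
lemma F_rec (μ : ℝ) (hμ : 0 < μ) (a : ℕ) (ha : 1 ≤ a) :
    (a : ℝ) * (∑' k : ℕ, μ ^ k / ((k ! : ℝ) * ((k : ℝ) + a)))
      + μ * (∑' k : ℕ, μ ^ k / ((k ! : ℝ) * ((k : ℝ) + (a + 1 : ℕ)))) = Real.exp μ := by
  set h : ℕ → ℝ := fun j => (j : ℝ) * μ ^ j / ((j ! : ℝ) * ((j : ℝ) + a)) with hh
  have hsucc : ∀ k : ℕ, h (k + 1) = μ * (μ ^ k / ((k ! : ℝ) * ((k : ℝ) + (a + 1 : ℕ)))) := by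
    intro k
    have hf : (((k + 1)! : ℕ) : ℝ) = ((k : ℝ) + 1) * (k ! : ℝ) := by
      push_cast [Nat.factorial_succ]; ring
    simp only [hh]
    push_cast
    rw [hf, pow_succ]
    have hk : (0:ℝ) < (k ! : ℝ) := by positivity
    have hka : (0:ℝ) < (k : ℝ) + 1 + a := by positivity
    field_simp
    ring
  have hsum1 : Summable (fun k : ℕ => μ ^ k / ((k ! : ℝ) * ((k : ℝ) + (a + 1 : ℕ)))) :=
    sumF μ hμ (a + 1) (by omega)
  have hsumh : Summable h := by
    rw [← summable_nat_add_iff 1]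
    simp only [hsucc]
    exact hsum1.mul_left μ
  have hμF : μ * (∑' k : ℕ, μ ^ k / ((k ! : ℝ) * ((k : ℝ) + (a + 1 : ℕ)))) = ∑' j, h j := by
    rw [Summable.tsum_eq_zero_add hsumh]
    have h0 : h 0 = 0 := by simp [hh]
    rw [h0, zero_add, ← tsum_mul_left]
    exact tsum_congr fun k => (hsucc k).symm
  rw [hμF, ← tsum_mul_left, ← Summable.tsum_add ((sumF μ hμ a ha).mul_left _) hsumh, ← exp_tsum' μ]
  apply tsum_congr
  intro k
  have hk : (0:ℝ) < (k ! : ℝ) := by positivity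
  have hka : (0:ℝ) < (k : ℝ) + a := by
    have : (1:ℝ) ≤ (a:ℝ) := by exact_mod_cast ha
    have := Nat.cast_nonneg (α := ℝ) k
    linarith
  simp only [hh]
  field_simp
  ring

lemma main_claim (μ : ℝ) (hμ : 0 < μ) : ∀ b : ℕ,
    (∑' k : ℕ, μ ^ k / ((k ! : ℝ) * ((k : ℝ) + (b + 1 : ℕ)))) =
      Real.exp μ * ((b ! : ℝ) * (-1) ^ (b + 1) / μ ^ (b + 1)) *
        ∑' k : ℕ, (-μ) ^ (k + (b + 1)) / (((k + (b + 1))! : ℝ)) := by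
  intro b
  induction b with
  | zero =>
      have hT : (∑' k : ℕ, (-μ) ^ (k + 1) / (((k + 1)! : ℝ))) = Real.exp (-μ) - 1 := by
        have := Summable.tsum_eq_zero_add (Real.summable_pow_div_factorial (-μ))
        rw [exp_tsum' (-μ)] at this
        simp only [pow_zero, Nat.factorial_zero] at this
        push_cast at this ⊢
        linarith [this]
      norm_num
      rw [F_one μ hμ, hT]
      have hexp : Real.exp μ * Real.exp (-μ) = 1 := by
        rw [← Real.exp_add]; simp
      field_simp
      nlinarith [hexp]
  | succ b ih =>
      have hrec := F_rec μ hμ (b + 1) (by omega)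
      have htail := tail_rec μ (b + 1)
      set T2 := ∑' k : ℕ, (-μ) ^ (k + (b + 1 + 1)) / (((k + (b + 1 + 1))! : ℝ)) with hT2
      rw [ih, htail] at hrec
      have hμne : μ ≠ 0 := hμ.ne'
      have hx : ((-1:ℝ) ^ (b + 1)) * ((-1:ℝ) ^ (b + 1)) = 1 := by
        rw [← pow_add]
        exact Even.neg_one_pow ⟨b + 1, by ring⟩
      have hnm : (-μ) ^ (b + 1) = (-1:ℝ) ^ (b + 1) * μ ^ (b + 1) := by
        rw [neg_pow]
      have hfact : (((b + 1)! : ℕ) : ℝ) = ((b:ℝ) + 1) * (b ! : ℝ) := by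
        push_cast [Nat.factorial_succ]; ring
      have hfne : ((b ! : ℕ) : ℝ) ≠ 0 := by positivity
      -- solve for F (b+2)
      have key : μ * (∑' k : ℕ, μ ^ k / ((k ! : ℝ) * ((k : ℝ) + (b + 1 + 1 : ℕ)))) =
          Real.exp μ - ((b:ℝ) + 1) *
            (Real.exp μ * ((b ! : ℝ) * (-1) ^ (b + 1) / μ ^ (b + 1)) *
              ((-μ) ^ (b + 1) / (((b + 1)! : ℝ)) + T2)) := by
        push_cast at hrec ⊢
        linarith [hrec]
      have hgoal : μ * (∑' k : ℕ, μ ^ k / ((k ! : ℝ) * ((k : ℝ) + (b + 1 + 1 : ℕ)))) =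
          μ * (Real.exp μ * ((((b+1)! : ℕ) : ℝ) * (-1) ^ (b + 1 + 1) / μ ^ (b + 1 + 1)) * T2) := by
        rw [key, hnm, hfact]
        rw [pow_succ (-1:ℝ) (b+1), pow_succ μ (b+1)]
        have hpne : μ ^ (b+1) ≠ 0 := pow_ne_zero _ hμne
        have hbx : ((-1:ℝ)) ^ (b * 2) = 1 := by
          rw [mul_comm, pow_mul]; norm_num
        field_simp
        ring_nf
        rw [hbx]
        ring
      have := mul_left_cancel₀ hμne hgoal
      convert this using 3

/-- Tail-series form of the non-central first inverse moment of a Poisson variate: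
`E[1/(Q+a)] = ((a-1)! (-1)^a/μ^a) Σ_{k=a}^∞ (-μ)^k/k!` for `a ≥ 1`. -/
theorem poisson_inv_moment_tail (μ : ℝ) (hμ : 0 < μ) (a : ℕ) (ha : 1 ≤ a) :
    ∑' k : ℕ, Real.exp (-μ) * μ ^ k / ((k.factorial : ℝ) * ((k : ℝ) + (a : ℝ))) =
      (((a - 1).factorial : ℝ) * (-1) ^ a / μ ^ a) *
        ∑' k : ℕ, (-μ) ^ (k + a) / (((k + a).factorial : ℝ)) := by
  obtain ⟨b, rfl⟩ : ∃ b, a = b + 1 := ⟨a - 1, by omega⟩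
  have h1 : ∑' k : ℕ, Real.exp (-μ) * μ ^ k / ((k ! : ℝ) * ((k : ℝ) + ((b+1 : ℕ) : ℝ))) =
      Real.exp (-μ) * ∑' k : ℕ, μ ^ k / ((k ! : ℝ) * ((k : ℝ) + (b+1 : ℕ))) := by
    rw [← tsum_mul_left]
    apply tsum_congr
    intro k
    ring
  rw [h1, main_claim μ hμ b]
  have hexp : Real.exp (-μ) * Real.exp μ = 1 := by rw [← Real.exp_add]; simp
  have : b + 1 - 1 = b := by omega
  rw [this, ← mul_assoc, ← mul_assoc, hexp, one_mul]
end

section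
/- For a Poisson random variable Q with mean μ > 0 and integers a ≥ 1, r ≥ 1: E[1/(Q+a)^r] = (1/μ^a)(S_a^{(r)} (1 - e^{-μ}) + Σ_{k=1}^{r-1} S_a^{(r-k)} μ_{-k} + Σ_{k=1}^{a-1} S_{a-k,k}^{(r)} μ^k), where μ_{-k} = Σ_{j=1}^∞ e^{-μ} μ^j/(j! j^k), S_a^{(r)} are the Stirling numbers of the first kind, and S_{n,l}^{(k)} are the non-central Stirling numbers of the first kind. -/
/-!
Multiplying by `μ ^ a` and substituting `m = k + a` turns the series into
`∑_{m ≥ 1} P[Q = m] (m)_a / m ^ r`, where `(m)_a = m (m - 1) ⋯ (m - a + 1)` is the falling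
factorial; the terms with `m < a` vanish. The polynomial `(x)_a = ∑_j S_a^{(j)} x ^ j` splits at
degree `r` as its truncation plus `x ^ r ∑_{k=1}^{a-1} S_{a-k,k}^{(r)} (x)_k`, which follows by
induction from `x ∏_{k=l+1}^{n+l} (x - k) = (x - (l + 1)) · x ∏_{k=l+2}^{n+l} (x - k)`.
After division by `m ^ r` the truncation contributes `S_a^{(r)} (1 - e^{-μ})` and the inverse
moments `S_a^{(r-k)} μ_{-k}` (the constant coefficient `S_a^{(0)}` vanishes), while the other
part contributes the factorial moments `E[(Q)_k] = μ ^ k`.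
-/

/-- The non-central Stirling numbers of the first kind `S_{n,l}^{(j)}`, defined as the
coefficient of `x^j` in `x ∏_{k=l+1}^{n-1+l} (x - k)`.  For `l = 0` these are the ordinary
Stirling numbers of the first kind. -/
noncomputable def ncStirling (n l j : ℕ) : ℝ :=
  (Polynomial.X * ∏ k ∈ Finset.Ico (l + 1) (n + l),
      (Polynomial.X - Polynomial.C (k : ℝ))).coeff j

open Polynomial Finset
open scoped Nat

namespace Polynomial

variable {R : Type*}

noncomputable def truncLE [Semiring R] (r : ℕ) (p : R[X]) : R[X] :=
  ∑ j ∈ range (r + 1), C (p.coeff j) * X ^ j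

theorem coeff_truncLE [Semiring R] (r : ℕ) (p : R[X]) (j : ℕ) :
    (truncLE r p).coeff j = if j ≤ r then p.coeff j else 0 := by
  simp [truncLE]

theorem eval_truncLE [CommSemiring R] (r : ℕ) (p : R[X]) (x : R) :
    (truncLE r p).eval x = ∑ j ∈ range (r + 1), p.coeff j * x ^ j := by
  simp [truncLE, eval_finsetSum]

theorem truncLE_X [Semiring R] {r : ℕ} (hr : 1 ≤ r) : truncLE r (X : R[X]) = X := by
  ext j
  simp only [coeff_truncLE, coeff_X]
  split_ifs <;> first | rfl | omega

theorem truncLE_X_sub_C_mul [CommRing R] (r : ℕ) (c : R) (q : R[X]) :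
    truncLE r ((X - C c) * q) = (X - C c) * truncLE r q - C (q.coeff r) * X ^ (r + 1) := by
  ext (_ | j)
  · simp [coeff_truncLE, sub_mul, mul_coeff_zero]
  · simp only [sub_mul, coeff_truncLE, Order.add_one_le_iff, coeff_sub, coeff_X_mul, coeff_C_mul,
      mul_ite, mul_zero, coeff_X_pow, Nat.add_right_cancel_iff, mul_one]
    split_ifs <;> first | omega | simp_all

end Polynomial

noncomputable def ncStirlingPoly (n l : ℕ) : ℝ[X] :=
  X * ∏ k ∈ Ico (l + 1) (n + l), (X - C (k : ℝ))

theorem ncStirling_eq_coeff (n l j : ℕ) : ncStirling n l j = (ncStirlingPoly n l).coeff j := rfl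

theorem ncStirlingPoly_one (l : ℕ) : ncStirlingPoly 1 l = X := by
  simp [ncStirlingPoly, add_comm 1 l]

theorem ncStirlingPoly_succ (l : ℕ) {n : ℕ} (hn : 1 ≤ n) :
    ncStirlingPoly (n + 1) l = (X - C ((l + 1 : ℕ) : ℝ)) * ncStirlingPoly n (l + 1) := by
  rw [ncStirlingPoly, ncStirlingPoly, prod_eq_prod_Ico_succ_bot (by omega),
    show n + (l + 1) = n + 1 + l by omega]
  ring

theorem ncStirlingPoly_zero_eq_descPochhammer {n : ℕ} (hn : n ≠ 0) :
    ncStirlingPoly n 0 = descPochhammer ℝ n := by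
  induction n with
  | zero => contradiction
  | succ n ih =>
    rcases Nat.eq_zero_or_pos n with rfl | hn
    · simp [ncStirlingPoly_one]
    · rw [descPochhammer_succ_right, ← ih hn.ne', ncStirlingPoly, ncStirlingPoly,
        add_zero, add_zero, prod_Ico_succ_top (by omega)]
      simp [mul_assoc]

theorem ncStirlingPoly_eq_truncLE_add {r : ℕ} (hr : 1 ≤ r) {n : ℕ} (hn : 1 ≤ n) (l : ℕ) :
    ncStirlingPoly n l = truncLE r (ncStirlingPoly n l) +
      X ^ r * ∑ i ∈ Ico 1 n, C ((ncStirlingPoly (n - i) (l + i)).coeff r) * ncStirlingPoly i l := by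
  induction n, hn using Nat.le_induction generalizing l with
  | base => simp [ncStirlingPoly_one, truncLE_X hr]
  | succ n hn ih =>
    have hsplit : ∑ i ∈ Ico 1 (n + 1), C ((ncStirlingPoly (n + 1 - i) (l + i)).coeff r) *
          ncStirlingPoly i l =
        C ((ncStirlingPoly n (l + 1)).coeff r) * X + (X - C ((l + 1 : ℕ) : ℝ)) *
          ∑ i ∈ Ico 1 n, C ((ncStirlingPoly (n - i) (l + 1 + i)).coeff r) *
            ncStirlingPoly i (l + 1) := by
      rw [sum_eq_sum_Ico_succ_bot (by omega), ← sum_Ico_add', mul_sum, Nat.add_sub_cancel,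
        ncStirlingPoly_one]
      congr 1
      refine sum_congr rfl fun i hi => ?_
      rw [ncStirlingPoly_succ l (mem_Ico.mp hi).1, show n + 1 - (i + 1) = n - i by omega,
        show l + (i + 1) = l + 1 + i by omega]
      ring
    rw [hsplit, ncStirlingPoly_succ l hn, truncLE_X_sub_C_mul]
    nth_rewrite 1 [ih (l + 1)]
    ring

theorem sum_range_mul_pow_div_pow {K : Type*} [Field K] (c : ℕ → K) {x : K} (hx : x ≠ 0)
    (r : ℕ) :
    (∑ j ∈ range (r + 1), c j * x ^ j) / x ^ r = ∑ k ∈ range (r + 1), c (r - k) / x ^ k := by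
  rw [← sum_range_reflect, sum_div]
  refine sum_congr rfl fun k hk => ?_
  have hkr : k ≤ r := Nat.lt_succ_iff.mp (mem_range.mp hk)
  rw [Nat.add_sub_cancel, div_eq_div_iff (pow_ne_zero _ hx) (pow_ne_zero _ hx), mul_assoc,
    ← pow_add, Nat.sub_add_cancel hkr]

theorem descFactorial_div_pow_eq {a r m : ℕ} (ha : 1 ≤ a) (hr : 1 ≤ r) (hm : m ≠ 0) :
    (m.descFactorial a : ℝ) / (m : ℝ) ^ r = ncStirling a 0 r +
      ∑ k ∈ Icc 1 (r - 1), ncStirling a 0 (r - k) / (m : ℝ) ^ k +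
      ∑ k ∈ Icc 1 (a - 1), ncStirling (a - k) k r * m.descFactorial k := by
  have hx : (m : ℝ) ≠ 0 := Nat.cast_ne_zero.mpr hm
  have hdesc : ∀ n ≠ 0, (ncStirlingPoly n 0).eval (m : ℝ) = m.descFactorial n := fun n hn => by
    rw [ncStirlingPoly_zero_eq_descPochhammer hn, descPochhammer_eval_eq_descFactorial]
  have hIcc : ∀ n, Icc 1 (n - 1) = Ico 1 n := fun n => by ext; simp only [mem_Icc, mem_Ico]; omega
  have hS0 : ncStirling a 0 0 = 0 := by simp [ncStirling]
  have heval := congrArg (eval (m : ℝ)) (ncStirlingPoly_eq_truncLE_add hr ha 0)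
  simp only [eval_add, eval_mul, eval_pow, eval_X, eval_finsetSum, eval_C, eval_truncLE] at heval
  rw [hdesc a (by omega)] at heval
  rw [heval, add_div, mul_div_cancel_left₀ _ (pow_ne_zero r hx), sum_range_mul_pow_div_pow _ hx,
    sum_range_succ, range_eq_Ico, sum_eq_sum_Ico_succ_bot (by omega), hIcc, hIcc]
  simp only [← ncStirling_eq_coeff, Nat.sub_self, hS0, zero_div, add_zero, Nat.sub_zero, pow_zero,
    div_one, zero_add]
  exact congrArg _ (sum_congr rfl fun i hi => by rw [hdesc i (by simp at hi; omega)])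

noncomputable def poissonProb (μ : ℝ) (n : ℕ) : ℝ := Real.exp (-μ) * μ ^ n / n !

section poissonProb

variable (μ : ℝ)

theorem hasSum_poissonProb : HasSum (poissonProb μ) 1 := by
  have h := (NormedSpace.expSeries_div_hasSum_exp μ).mul_left (Real.exp (-μ))
  rw [← Real.exp_eq_exp_ℝ, ← Real.exp_add, neg_add_cancel, Real.exp_zero] at h
  simp only [← mul_div_assoc] at h
  exact h

theorem hasSum_poissonProb_succ :
    HasSum (fun i => poissonProb μ (i + 1)) (1 - Real.exp (-μ)) := by
  simpa [poissonProb] using (hasSum_nat_add_iff' 1).mpr (hasSum_poissonProb μ)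

theorem poissonProb_nonneg {μ : ℝ} (hμ : 0 ≤ μ) (n : ℕ) : 0 ≤ poissonProb μ n := by
  unfold poissonProb
  positivity

theorem poissonProb_add_mul_descFactorial (n a : ℕ) :
    poissonProb μ (n + a) * (n + a).descFactorial a = μ ^ a * poissonProb μ n := by
  have h := Nat.factorial_mul_descFactorial (Nat.le_add_left a n)
  rw [Nat.add_sub_cancel] at h
  have hn : (n ! : ℝ) ≠ 0 := by positivity
  have hna : ((n + a) ! : ℝ) ≠ 0 := by positivity
  rw [poissonProb, poissonProb, ← h, pow_add]
  push_cast
  field_simp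

theorem HasSum.poissonProb_mul_descFactorial {f : ℕ → ℝ} {s : ℝ} (a : ℕ)
    (h : HasSum (fun n => poissonProb μ n * f (n + a)) s) :
    HasSum (fun m => poissonProb μ m * m.descFactorial a * f m) (μ ^ a * s) := by
  have hlow : ∑ m ∈ range a, poissonProb μ m * m.descFactorial a * f m = 0 :=
    sum_eq_zero fun m hm => by
      rw [Nat.descFactorial_eq_zero_iff_lt.mpr (mem_range.mp hm)]
      simp
  rw [← hasSum_nat_add_iff' a, hlow, sub_zero]
  simpa only [poissonProb_add_mul_descFactorial, mul_assoc] using h.mul_left (μ ^ a)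

theorem hasSum_poissonProb_mul_descFactorial (k : ℕ) :
    HasSum (fun m => poissonProb μ m * m.descFactorial k) (μ ^ k) := by
  have h := HasSum.poissonProb_mul_descFactorial μ k (f := fun _ => 1)
    (by simpa using hasSum_poissonProb μ)
  simpa only [mul_one] using h

theorem hasSum_poissonProb_succ_mul_descFactorial {k : ℕ} (hk : k ≠ 0) :
    HasSum (fun i => poissonProb μ (i + 1) * (i + 1).descFactorial k) (μ ^ k) := by
  simpa [Nat.descFactorial_of_lt (Nat.pos_of_ne_zero hk)] using
    (hasSum_nat_add_iff' 1).mpr (hasSum_poissonProb_mul_descFactorial μ k)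

end poissonProb

theorem summable_div_of_one_le {g d : ℕ → ℝ} (hg : Summable g) (hg0 : ∀ n, 0 ≤ g n)
    (hd : ∀ n, 1 ≤ d n) : Summable fun n => g n / d n :=
  hg.of_nonneg_of_le (fun n => div_nonneg (hg0 n) (zero_le_one.trans (hd n)))
    fun n => div_le_self (hg0 n) (hd n)

theorem summable_poissonProb_succ_div_pow {μ : ℝ} (hμ : 0 ≤ μ) (k : ℕ) :
    Summable fun i : ℕ => poissonProb μ (i + 1) / ((i : ℝ) + 1) ^ k :=
  summable_div_of_one_le (hasSum_poissonProb_succ μ).summable (fun _ => poissonProb_nonneg hμ _)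
    fun i => one_le_pow₀ (le_add_of_nonneg_left i.cast_nonneg)

theorem mul_tsum_poissonProb_div_add_pow {μ : ℝ} (hμ : 0 ≤ μ) {a r : ℕ} (ha : 1 ≤ a)
    (hr : 1 ≤ r) :
    μ ^ a * ∑' n : ℕ, poissonProb μ n / ((n : ℝ) + a) ^ r =
      ncStirling a 0 r * (1 - Real.exp (-μ)) +
        ∑ k ∈ Icc 1 (r - 1),
          ncStirling a 0 (r - k) * ∑' i : ℕ, poissonProb μ (i + 1) / ((i : ℝ) + 1) ^ k +
        ∑ k ∈ Icc 1 (a - 1), ncStirling (a - k) k r * μ ^ k := by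
  set F : ℕ → ℝ := fun i => poissonProb μ (i + 1) * (i + 1).descFactorial a / ((i : ℝ) + 1) ^ r
  have hlhs : HasSum F (μ ^ a * ∑' n : ℕ, poissonProb μ n / ((n : ℝ) + a) ^ r) := by
    have hs : HasSum (fun n => poissonProb μ n * (1 / ((n + a : ℕ) : ℝ) ^ r))
        (∑' n : ℕ, poissonProb μ n / ((n : ℝ) + a) ^ r) := by
      push_cast
      simp only [mul_one_div]
      exact (summable_div_of_one_le (hasSum_poissonProb μ).summable (poissonProb_nonneg hμ)
        fun n => one_le_pow₀ (by norm_cast; omega)).hasSum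
    have h := (hasSum_nat_add_iff' 1).mpr
      (hs.poissonProb_mul_descFactorial μ a (f := fun m => 1 / (m : ℝ) ^ r))
    simp only [sum_range_one, Nat.descFactorial_of_lt ha, Nat.cast_zero, mul_zero, zero_div,
      sub_zero, mul_one_div, Nat.cast_add, Nat.cast_one] at h
    exact h
  have hrhs : HasSum F (ncStirling a 0 r * (1 - Real.exp (-μ)) +
        ∑ k ∈ Icc 1 (r - 1),
          ncStirling a 0 (r - k) * ∑' i : ℕ, poissonProb μ (i + 1) / ((i : ℝ) + 1) ^ k +
        ∑ k ∈ Icc 1 (a - 1), ncStirling (a - k) k r * μ ^ k) := by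
    have hconst := (hasSum_poissonProb_succ μ).mul_left (ncStirling a 0 r)
    have hinv := hasSum_sum fun k (_ : k ∈ Icc 1 (r - 1)) =>
      (summable_poissonProb_succ_div_pow hμ k).hasSum.mul_left (ncStirling a 0 (r - k))
    have hfact := hasSum_sum fun k (hk : k ∈ Icc 1 (a - 1)) =>
      (hasSum_poissonProb_succ_mul_descFactorial μ (k := k) (by simp at hk; omega)).mul_left
        (ncStirling (a - k) k r)
    refine ((hconst.add hinv).add hfact).congr_fun fun i => ?_
    have h := descFactorial_div_pow_eq ha hr i.succ_ne_zero
    push_cast at h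
    simp only [F, mul_div_assoc, h, mul_add, mul_sum, Nat.succ_eq_add_one]
    congr 1
    congr 1
    · ring
    all_goals exact sum_congr rfl fun _ _ => by ring
  exact hlhs.unique hrhs

/-- Closed form for the inverse moments of a Poisson variate about `-a` in terms of
central and non-central Stirling numbers of the first kind. -/
theorem poisson_inv_moment_stirling (μ : ℝ) (hμ : 0 < μ) (a r : ℕ)
    (ha : 1 ≤ a) (hr : 1 ≤ r) :
    ∑' k : ℕ, Real.exp (-μ) * μ ^ k / ((k.factorial : ℝ) * ((k : ℝ) + (a : ℝ)) ^ r) =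
      (1 / μ ^ a) *
        (ncStirling a 0 r * (1 - Real.exp (-μ)) +
          (∑ k ∈ Finset.Icc 1 (r - 1), ncStirling a 0 (r - k) *
            ∑' i : ℕ, Real.exp (-μ) * μ ^ (i + 1) /
              (((i + 1).factorial : ℝ) * ((i : ℝ) + 1) ^ k)) +
          ∑ k ∈ Finset.Icc 1 (a - 1), ncStirling (a - k) k r * μ ^ k) := by
  have h := mul_tsum_poissonProb_div_add_pow hμ.le ha hr
  simp only [poissonProb, div_div] at h
  rw [← h, one_div, inv_mul_cancel_left₀ (pow_ne_zero a hμ.ne')]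
end

section
/- The non-central Stirling numbers of the first kind with index 1 satisfy S_{j,l}^{(1)} = (-1)^{j-1} (j+l-1)!/l! for all integers j ≥ 1, l ≥ 0. -/
open Finset Polynomial Nat

theorem ncStirling_one_eq_prod (n l : ℕ) :
    ncStirling n l 1 = ∏ k ∈ Ico (l + 1) (n + l), -(k : ℝ) := by
  rw [ncStirling, coeff_X_mul, coeff_zero_eq_eval_zero, eval_prod]
  simp only [eval_sub, eval_X, eval_C, zero_sub]

theorem factorial_mul_prod_Ico (l m : ℕ) :
    l ! * ∏ k ∈ Ico (l + 1) (l + m + 1), k = (l + m)! := by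
  rw [← prod_Ico_id_eq_factorial, ← prod_Ico_id_eq_factorial,
    prod_Ico_consecutive _ (by omega) (by omega)]

/-- `S_{j,l}^{(1)} = (-1)^{j-1} (j+l-1)!/l!` for `j ≥ 1`. -/
theorem ncStirling_one (j l : ℕ) (hj : 1 ≤ j) :
    ncStirling j l 1 = (-1) ^ (j - 1) * ((j + l - 1).factorial : ℝ) / (l.factorial : ℝ) := by
  obtain ⟨m, rfl⟩ := Nat.exists_eq_add_of_le' hj
  rw [ncStirling_one_eq_prod, prod_neg, Nat.card_Ico, show m + 1 + l = l + m + 1 by ring,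
    Nat.add_sub_add_right, Nat.add_sub_cancel_left, Nat.add_sub_cancel, Nat.add_sub_cancel,
    ← factorial_mul_prod_Ico l m]
  push_cast
  field_simp
end

section
/- For any integer n ≥ 1 and real μ > 0: Σ_{a=1}^n C(n,a) ((a-1)!/μ^a) Σ_{j=0}^{a-1} (-μ)^j/j! = Σ_{l=1}^n (l-1)! μ^{-l}. -/
/-!
Writing `a = l + j`, the coefficient of `μ⁻ˡ` on the left is
`(l - 1)! * ∑ⱼ (-1)ʲ C(n, l + j) C(l - 1 + j, j)`. Since `C(-l, j) = (-1)ʲ C(l - 1 + j, j)`,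
this alternating sum is the Chu–Vandermonde expansion of `C(n + (-l), n - l) = 1`.
-/

open Finset Nat

theorem alternating_sum_range_choose_add_mul_choose {m n : ℕ} (h : m < n) :
    ∑ j ∈ range (n - m), (-1 : ℤ) ^ j * n.choose (m + 1 + j) * (m + j).choose j = 1 := by
  have vandermonde := Ring.add_choose_eq (r := (n : ℤ)) (s := -((m + 1 : ℕ) : ℤ)) (n - (m + 1))
    (Commute.all _ _)
  rw [← sub_eq_add_neg, ← Nat.cast_sub h, Ring.choose_natCast, Nat.choose_self, Nat.cast_one,
    ← Nat.sum_antidiagonal_swap, Nat.sum_antidiagonal_eq_sum_range_succ_mk] at vandermonde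
  rw [show n - m = n - (m + 1) + 1 by omega]
  refine .trans (sum_congr rfl fun j hj => ?_) vandermonde.symm
  have hj : j ≤ n - (m + 1) := Nat.lt_succ_iff.mp (mem_range.mp hj)
  simp only [Prod.swap, Ring.choose_neg, Ring.choose_natCast]
  rw [Nat.choose_symm_of_eq_add (by omega : n = n - (m + 1) - j + (m + 1 + j)),
    show ((m + 1 : ℕ) + j - 1 : ℤ) = (m + j : ℕ) by push_cast; ring, Ring.choose_natCast,
    Units.smul_def, Int.coe_negOnePow_natCast, smul_eq_mul]
  ring

theorem sum_Icc_one_sum_range_eq_sum_Icc_one_sum_range_add {M : Type*} [AddCommMonoid M]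
    (n : ℕ) (F : ℕ → ℕ → M) :
    ∑ a ∈ Icc 1 n, ∑ j ∈ range a, F a j = ∑ l ∈ Icc 1 n, ∑ j ∈ range (n + 1 - l), F (l + j) j := by
  rw [sum_sigma', sum_sigma']
  refine sum_bij' (fun p _ => ⟨p.1 - p.2, p.2⟩) (fun p _ => ⟨p.1 + p.2, p.2⟩) ?_ ?_ ?_ ?_ ?_ <;>
    rintro ⟨a, j⟩ h <;> simp only [mem_sigma, mem_Icc, mem_range] at h ⊢
  all_goals first | omega | (simp only [Sigma.mk.injEq, heq_eq_eq]; omega) | (congr 1; omega)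

theorem double_sum_simplification_general (n : ℕ) (μ : ℝ) (hμ : 0 < μ) :
    ∑ a ∈ Finset.Icc 1 n, (n.choose a : ℝ) * (((a - 1).factorial : ℝ) / μ ^ a) *
        ∑ j ∈ Finset.range a, (-μ) ^ j / (j.factorial : ℝ) =
      ∑ l ∈ Finset.Icc 1 n, ((l - 1).factorial : ℝ) / μ ^ l := by
  simp_rw [mul_sum]
  rw [sum_Icc_one_sum_range_eq_sum_Icc_one_sum_range_add]
  refine sum_congr rfl fun l hl => ?_
  obtain ⟨m, rfl⟩ : ∃ m, l = m + 1 := ⟨l - 1, by grind⟩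
  have hmn : m < n := by grind
  have term (j : ℕ) : (n.choose (m + 1 + j) : ℝ) * ((m + 1 + j - 1)! / μ ^ (m + 1 + j)) *
      ((-μ) ^ j / j !) =
        (-1) ^ j * n.choose (m + 1 + j) * (m + j).choose j * (m ! / μ ^ (m + 1)) := by
    rw [show m + 1 + j - 1 = m + j by omega, ← Nat.add_choose_mul_factorial_mul_factorial m j,
      pow_add, neg_pow]
    push_cast
    field_simp [hμ.ne']
  have alternating_sum :
      ∑ j ∈ range (n - m), (-1 : ℝ) ^ j * n.choose (m + 1 + j) * (m + j).choose j = 1 := by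
    exact_mod_cast alternating_sum_range_choose_add_mul_choose hmn
  rw [show n + 1 - (m + 1) = n - m by omega, sum_congr rfl fun j _ => term j, ← sum_mul,
    alternating_sum, one_mul, Nat.add_sub_cancel]

/-- `Σ_{a=1}^n C(n,a) ((a-1)!/μ^a) Σ_{j=0}^{a-1} (-μ)^j/j! = Σ_{l=1}^n (l-1)! μ^{-l}`. -/
theorem double_sum_simplification (n : ℕ) (hn : 1 ≤ n) (μ : ℝ) (hμ : 0 < μ) :
    ∑ a ∈ Finset.Icc 1 n, (n.choose a : ℝ) * (((a - 1).factorial : ℝ) / μ ^ a) *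
        ∑ j ∈ Finset.range a, (-μ) ^ j / (j.factorial : ℝ) =
      ∑ l ∈ Finset.Icc 1 n, ((l - 1).factorial : ℝ) / μ ^ l :=
  double_sum_simplification_general n μ hμ
end

section
/- For integers n ≥ l ≥ 1: Σ_{j=0}^{n-l} C(n, j+l) ((j+l-1)!/j!) (-1)^j = (l-1)!. -/
/-!
Put `l = m + 1`. Since `(j + m)! / j! = m! * C(j + m, m)`, the claim is `m!` times the integer
identity `∑ⱼ (-1)ʲ C(n, m + 1 + j) C(m + j, m) = 1`. That identity follows by induction on `n`:
Pascal's rule splits the sum for `n + 1` into the sum for `n` and `∑ⱼ (-1)ʲ C(n, m + j) C(m + j, m)`,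
which equals `C(n, m) ∑ⱼ (-1)ʲ C(n - m, j) = 0`.
-/

open Finset Nat

theorem Int.alternating_sum_choose_mul_choose {m r : ℕ} (hr : r ≠ 0) :
    ∑ j ∈ Finset.range (r + 1), (-1) ^ j * ((m + r).choose (m + j) * (m + j).choose m : ℤ) = 0 := by
  have hfactor (j : ℕ) :
      (m + r).choose (m + j) * (m + j).choose m = (m + r).choose m * r.choose j := by
    simpa using Nat.choose_mul (n := m + r) (Nat.le_add_right m j)
  simp_rw [← Nat.cast_mul, hfactor, Nat.cast_mul, mul_left_comm _ ((m + r).choose m : ℤ), ← mul_sum,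
    Int.alternating_sum_range_choose_of_ne hr, mul_zero]

theorem Int.alternating_sum_choose_succ_mul_choose (m r : ℕ) :
    ∑ j ∈ Finset.range (r + 1),
      (-1) ^ j * ((m + r + 1).choose (m + j + 1) * (m + j).choose m : ℤ) = 1 := by
  induction r with
  | zero => simp
  | succ r ih =>
    have hpascal (j : ℕ) : ((m + (r + 1) + 1).choose (m + j + 1) : ℤ) =
        (m + (r + 1)).choose (m + j) + (m + r + 1).choose (m + j + 1) := by
      rw [show m + (r + 1) = m + r + 1 by ring, Nat.choose_succ_succ', Nat.cast_add]
    have hvanish : ((m + r + 1).choose (m + (r + 1) + 1) : ℤ) = 0 := by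
      rw [Nat.choose_eq_zero_of_lt (by omega), Nat.cast_zero]
    simp_rw [hpascal, add_mul, mul_add, sum_add_distrib,
      Int.alternating_sum_choose_mul_choose (Nat.succ_ne_zero r), sum_range_succ _ (r + 1), hvanish, ih]
    ring

theorem Nat.cast_factorial_add_div_factorial {K : Type*} [Field K] [CharZero K] (j m : ℕ) :
    ((j + m)! / j ! : K) = m ! * (j + m).choose m := by
  rw [← Nat.add_choose_mul_factorial_mul_factorial j m, Nat.cast_mul, Nat.cast_mul, mul_right_comm,
    mul_div_cancel_right₀ _ (Nat.cast_ne_zero.mpr j.factorial_ne_zero), mul_comm]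

/-- `Σ_{j=0}^{n-l} C(n,j+l) ((j+l-1)!/j!) (-1)^j = (l-1)!` for `n ≥ l ≥ 1`. -/
theorem binomial_factorial_alternating_sum (n l : ℕ) (hl : 1 ≤ l) (hn : l ≤ n) :
    ∑ j ∈ Finset.range (n - l + 1), (n.choose (j + l) : ℝ) *
        (((j + l - 1).factorial : ℝ) / (j.factorial : ℝ)) * (-1) ^ j =
      ((l - 1).factorial : ℝ) := by
  obtain ⟨m, rfl⟩ : ∃ m, l = m + 1 := ⟨l - 1, by omega⟩
  obtain ⟨r, rfl⟩ : ∃ r, n = m + r + 1 := ⟨n - (m + 1), by omega⟩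
  have hsum := congrArg (fun x : ℤ => (m ! : ℝ) * x) (Int.alternating_sum_choose_succ_mul_choose m r)
  push_cast [mul_sum, mul_one] at hsum
  have hrange : m + r + 1 - (m + 1) + 1 = r + 1 := by omega
  simp only [hrange, Nat.add_sub_cancel, ← add_assoc, Nat.cast_factorial_add_div_factorial]
  refine Eq.trans (sum_congr rfl fun j _ => ?_) hsum
  rw [add_comm j m]
  ring
end

section
/- For a Poisson variate Q with mean μ > 0 and integer n ≥ 1, the alternating forward difference Σ_{a=0}^n C(n,a)(-1)^a q(a), with q(0) = E^+[1/Q] and q(a) = E[1/(Q+a)] for a ≥ 1, equals e^{-μ} Er(μ) + Σ_{l=1}^n (e^{-μ} C(n,l) - 1) (l-1)!/μ^l, where Er(μ) = Σ_{k=1}^∞ μ^k/(k·k!). -/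
/-!
Write `q a = E[1/(Q + a)]`. The Poisson identity `μ E[f(Q + 1)] = E[Q f(Q)]` gives
`μ q(1) = 1 - e^{-μ}` and `μ q(a + 1) = 1 - a q(a)` for `a ≥ 1`. The sequence
`r a = (-1)^a (a-1)! e^{-μ} / μ^a` solves the homogeneous recurrence `μ r(a + 1) = -a r(a)` and
accounts for the defect at `a = 0`, so `p = q - r` satisfies `μ p(b + 1) = 1 - b p(b)` for every
`b`. For any such `p`, Pascal's rule and `b C(n, b) = n C(n - 1, b - 1)` give
`∑_b C(n, b) (-1)^b p(b + 1) = n! / μ^{n+1}`, and summing these over `n` yields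
`∑_{a=1}^n C(n, a) (-1)^a p(a) = -∑_{l=1}^n (l-1)! / μ^l`. The `r`-part contributes
`e^{-μ} ∑_l C(n, l) (l-1)! / μ^l`, and the `a = 0` term is `e^{-μ} Er(μ)` as it stands.
-/

open Finset Nat

noncomputable def poissonWeight (μ : ℝ) (k : ℕ) : ℝ :=
  Real.exp (-μ) * μ ^ k / k !

/-- `poissonInvMoment μ c = E[1/(Q + c)]` for `Q ~ Poisson(μ)`. -/
noncomputable def poissonInvMoment (μ c : ℝ) : ℝ :=
  ∑' k : ℕ, poissonWeight μ k * ((k : ℝ) + c)⁻¹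

noncomputable def poissonInvMomentExpPart (μ : ℝ) (a : ℕ) : ℝ :=
  (-1) ^ a * ((a - 1)! : ℝ) * Real.exp (-μ) / μ ^ a

lemma hasSum_poissonWeight (μ : ℝ) : HasSum (poissonWeight μ) 1 := by
  have h := (NormedSpace.expSeries_div_hasSum_exp μ).mul_left (Real.exp (-μ))
  rw [← Real.exp_eq_exp_ℝ, ← Real.exp_add, neg_add_cancel, Real.exp_zero] at h
  exact h.congr_fun fun k => mul_div_assoc _ _ _

lemma summable_poissonWeight_mul_inv_add (μ : ℝ) {c : ℝ} (hc : 0 < c) :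
    Summable fun k : ℕ => poissonWeight μ k * ((k : ℝ) + c)⁻¹ := by
  refine .of_norm_bounded ((hasSum_poissonWeight μ).summable.abs.mul_right c⁻¹) fun k => ?_
  rw [Real.norm_eq_abs, abs_mul, abs_inv, abs_of_pos (by positivity : (0 : ℝ) < k + c)]
  gcongr
  linarith [k.cast_nonneg (α := ℝ)]

lemma mul_tsum_poissonWeight_mul_succ (μ : ℝ) (f : ℕ → ℝ) :
    μ * ∑' k : ℕ, poissonWeight μ k * f (k + 1) = ∑' k : ℕ, poissonWeight μ k * (k * f k) := by
  set g : ℕ → ℝ := fun k => poissonWeight μ k * (k * f k)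
  calc μ * ∑' k : ℕ, poissonWeight μ k * f (k + 1) = ∑' k : ℕ, g (k + 1) := by
        rw [← tsum_mul_left]
        refine tsum_congr fun k => ?_
        simp only [g, poissonWeight, factorial_succ]
        push_cast
        field_simp
        ring
    _ = ∑' k : ℕ, g k := by
        rw [← tsum_pnat_eq_tsum_succ, tsum_pnat_eq_tsum_of_eq_zero (by simp [g])]

lemma mul_poissonInvMoment_one (μ : ℝ) : μ * poissonInvMoment μ 1 = 1 - Real.exp (-μ) := by
  have h := ((hasSum_nat_add_iff' 1).mpr (hasSum_poissonWeight μ)).tsum_eq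
  rw [poissonInvMoment, ← tsum_mul_left]
  convert h using 1
  · refine tsum_congr fun k => ?_
    simp only [poissonWeight, factorial_succ]
    push_cast
    field_simp
    ring
  · simp [poissonWeight]

lemma mul_poissonInvMoment_add_one (μ : ℝ) {c : ℝ} (hc : 0 < c) :
    μ * poissonInvMoment μ (c + 1) = 1 - c * poissonInvMoment μ c := by
  have hw := hasSum_poissonWeight μ
  calc μ * poissonInvMoment μ (c + 1)
      = ∑' k : ℕ, poissonWeight μ k * (k * ((k : ℝ) + c)⁻¹) := by
        rw [← mul_tsum_poissonWeight_mul_succ, poissonInvMoment]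
        congr 1
        refine tsum_congr fun k => ?_
        push_cast
        ring_nf
    _ = ∑' k : ℕ, (poissonWeight μ k - c * (poissonWeight μ k * ((k : ℝ) + c)⁻¹)) := by
        refine tsum_congr fun k => ?_
        have : (k : ℝ) + c ≠ 0 := by positivity
        field_simp
        ring
    _ = 1 - c * poissonInvMoment μ c := by
        rw [hw.summable.tsum_sub ((summable_poissonWeight_mul_inv_add μ hc).mul_left c),
          hw.tsum_eq, tsum_mul_left, poissonInvMoment]

lemma mul_poissonInvMoment_sub_expPart_succ {μ : ℝ} (hμ : μ ≠ 0) (b : ℕ) :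
    μ * (poissonInvMoment μ (b + 1 : ℕ) - poissonInvMomentExpPart μ (b + 1)) =
      1 - b * (poissonInvMoment μ b - poissonInvMomentExpPart μ b) := by
  rcases b with _ | b
  · have h1 := mul_poissonInvMoment_one μ
    simp only [poissonInvMomentExpPart, zero_add, Nat.cast_one]
    field_simp
    linear_combination h1
  · have hq := mul_poissonInvMoment_add_one μ (c := (b + 1 : ℕ)) (by positivity)
    push_cast at hq ⊢
    rw [mul_sub, hq]
    simp only [poissonInvMomentExpPart, add_tsub_cancel_right, factorial_succ, pow_succ]
    push_cast
    field_simp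
    ring

lemma alternating_sum_choose_succ_mul_expPart (μ : ℝ) (n : ℕ) :
    ∑ a ∈ range n, (n.choose (a + 1) : ℝ) * (-1) ^ (a + 1) * poissonInvMomentExpPart μ (a + 1) =
      ∑ a ∈ range n, Real.exp (-μ) * n.choose (a + 1) * a ! / μ ^ (a + 1) := by
  refine sum_congr rfl fun a _ => ?_
  have hsq : ((-1 : ℝ) ^ (a + 1)) * (-1) ^ (a + 1) = 1 := by rw [← mul_pow]; norm_num
  simp only [poissonInvMomentExpPart, add_tsub_cancel_right]
  linear_combination (Real.exp (-μ) * n.choose (a + 1) * a ! / μ ^ (a + 1)) * hsq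

section Recurrence

variable {μ : ℝ} {p : ℕ → ℝ}

lemma alternating_sum_choose_mul_succ_of_recurrence (hμ : μ ≠ 0)
    (hp : ∀ b : ℕ, μ * p (b + 1) = 1 - b * p b) (n : ℕ) :
    ∑ b ∈ range (n + 1), (n.choose b : ℝ) * (-1) ^ b * p (b + 1) = n ! / μ ^ (n + 1) := by
  induction n with
  | zero =>
    have h1 := hp 0
    simp only [Nat.cast_zero, zero_mul, sub_zero] at h1
    simp only [zero_add, range_one, sum_singleton, choose_self, Nat.cast_one, pow_zero, one_mul,
      factorial_zero, pow_one]
    field_simp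
    linarith
  | succ n ih =>
    have hchoose : ∑ b ∈ range (n + 2), ((n + 1).choose b : ℝ) * (-1) ^ b = 0 := by
      have := congrArg (Int.cast : ℤ → ℝ) (Int.alternating_sum_range_choose_of_ne n.succ_ne_zero)
      push_cast at this
      simpa only [mul_comm] using this
    have hshift : ∑ b ∈ range (n + 2), ((n + 1).choose b : ℝ) * (-1) ^ b * (b * p b) =
        -((n + 1) * ∑ b ∈ range (n + 1), (n.choose b : ℝ) * (-1) ^ b * p (b + 1)) := by
      rw [sum_range_succ', mul_sum, ← sum_neg_distrib]
      simp only [Nat.cast_zero, zero_mul, mul_zero, add_zero]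
      refine sum_congr rfl fun b _ => ?_
      have := congrArg (Nat.cast : ℕ → ℝ) (add_one_mul_choose_eq n b)
      push_cast at this ⊢
      linear_combination (-1) ^ b * p (b + 1) * this
    have hsum : μ * ∑ b ∈ range (n + 2), ((n + 1).choose b : ℝ) * (-1) ^ b * p (b + 1) =
        (n + 1) * (n ! / μ ^ (n + 1)) := by
      simp only [mul_sum, mul_left_comm μ, hp, mul_sub, mul_one, sum_sub_distrib, hchoose, hshift,
        ih]
      ring
    rw [factorial_succ, Nat.cast_mul, pow_succ]
    field_simp at hsum ⊢
    push_cast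
    linear_combination hsum

lemma alternating_sum_choose_succ_mul_succ_of_recurrence (hμ : μ ≠ 0)
    (hp : ∀ b : ℕ, μ * p (b + 1) = 1 - b * p b) (n : ℕ) :
    ∑ a ∈ range n, (n.choose (a + 1) : ℝ) * (-1) ^ (a + 1) * p (a + 1) =
      -∑ m ∈ range n, (m ! : ℝ) / μ ^ (m + 1) := by
  induction n with
  | zero => simp
  | succ n ih =>
    have hpascal :
        ∑ a ∈ range (n + 1), ((n + 1).choose (a + 1) : ℝ) * (-1) ^ (a + 1) * p (a + 1) =
          ∑ a ∈ range (n + 1), (n.choose (a + 1) : ℝ) * (-1) ^ (a + 1) * p (a + 1) -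
            ∑ a ∈ range (n + 1), (n.choose a : ℝ) * (-1) ^ a * p (a + 1) := by
      rw [← sum_sub_distrib]
      refine sum_congr rfl fun a _ => ?_
      rw [choose_succ_succ']
      push_cast
      ring
    rw [hpascal, alternating_sum_choose_mul_succ_of_recurrence hμ hp, sum_range_succ,
      choose_succ_self, ih, sum_range_succ]
    simp only [Nat.cast_zero, zero_mul, add_zero]
    ring

end Recurrence

theorem poisson_difference_first_inv_moment_general (μ : ℝ) (hμ : 0 < μ) (n : ℕ) :
    ∑ a ∈ Finset.range (n + 1), (n.choose a : ℝ) * (-1) ^ a *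
        (if a = 0 then
          ∑' k : ℕ, Real.exp (-μ) * μ ^ (k + 1) / (((k + 1).factorial : ℝ) * ((k : ℝ) + 1))
         else
          ∑' k : ℕ, Real.exp (-μ) * μ ^ k / ((k.factorial : ℝ) * ((k : ℝ) + (a : ℝ)))) =
      Real.exp (-μ) * (∑' k : ℕ, μ ^ (k + 1) / (((k : ℝ) + 1) * ((k + 1).factorial : ℝ))) +
        ∑ l ∈ Finset.Icc 1 n,
          (Real.exp (-μ) * (n.choose l : ℝ) - 1) * ((l - 1).factorial : ℝ) / μ ^ l := by
  set q := poissonInvMoment μ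
  set r := poissonInvMomentExpPart μ
  set Er := ∑' k : ℕ, μ ^ (k + 1) / (((k : ℝ) + 1) * ((k + 1)! : ℝ))
  have hq (a : ℕ) : ∑' k : ℕ, Real.exp (-μ) * μ ^ k / ((k ! : ℝ) * ((k : ℝ) + a)) = q a :=
    tsum_congr fun k => by simp only [poissonWeight, div_eq_mul_inv, mul_inv]; ring
  have hEr : ∑' k : ℕ, Real.exp (-μ) * μ ^ (k + 1) / (((k + 1)! : ℝ) * ((k : ℝ) + 1)) =
      Real.exp (-μ) * Er := by
    rw [← tsum_mul_left]
    exact tsum_congr fun k => by ring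
  have hp := alternating_sum_choose_succ_mul_succ_of_recurrence (p := fun a => q a - r a)
    hμ.ne' (mul_poissonInvMoment_sub_expPart_succ hμ.ne') n
  have hIcc := sum_Ico_add'
    (fun l => (Real.exp (-μ) * (n.choose l : ℝ) - 1) * ((l - 1)! : ℝ) / μ ^ l) 0 n 1
  rw [zero_add, Ico_add_one_right_eq_Icc, ← range_eq_Ico] at hIcc
  calc _ = Real.exp (-μ) * Er + ∑ a ∈ range n,
        (n.choose (a + 1) : ℝ) * (-1) ^ (a + 1) * ((q (a + 1 : ℕ) - r (a + 1)) + r (a + 1)) := by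
        rw [sum_range_succ', add_comm, if_pos rfl, hEr]
        simp only [Nat.add_one_ne_zero, if_false, hq, sub_add_cancel, choose_zero_right, pow_zero,
          Nat.cast_one, one_mul]
    _ = Real.exp (-μ) * Er +
        ∑ a ∈ range n, (Real.exp (-μ) * n.choose (a + 1) - 1) * a ! / μ ^ (a + 1) := by
        simp only [mul_add, sum_add_distrib]
        rw [hp, alternating_sum_choose_succ_mul_expPart, ← sum_neg_distrib, ← sum_add_distrib]
        exact congrArg _ (sum_congr rfl fun a _ => by ring)
    _ = _ := by simp [← hIcc]

/-- The alternating forward difference of the sequence of shifted first inverse moments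
of a Poisson variate:
`Σ_{a=0}^n C(n,a)(-1)^a q(a) = e^{-μ} Er(μ) + Σ_{l=1}^n (e^{-μ} C(n,l) - 1)(l-1)!/μ^l`,
where `q(0) = E^+[1/Q]`, `q(a) = E[1/(Q+a)]` and `Er(μ) = Σ_{k≥1} μ^k/(k·k!)`. -/
theorem poisson_difference_first_inv_moment (μ : ℝ) (hμ : 0 < μ) (n : ℕ) (hn : 1 ≤ n) :
    ∑ a ∈ Finset.range (n + 1), (n.choose a : ℝ) * (-1) ^ a *
        (if a = 0 then
          ∑' k : ℕ, Real.exp (-μ) * μ ^ (k + 1) / (((k + 1).factorial : ℝ) * ((k : ℝ) + 1))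
         else
          ∑' k : ℕ, Real.exp (-μ) * μ ^ k / ((k.factorial : ℝ) * ((k : ℝ) + (a : ℝ)))) =
      Real.exp (-μ) * (∑' k : ℕ, μ ^ (k + 1) / (((k : ℝ) + 1) * ((k + 1).factorial : ℝ))) +
        ∑ l ∈ Finset.Icc 1 n,
          (Real.exp (-μ) * (n.choose l : ℝ) - 1) * ((l - 1).factorial : ℝ) / μ ^ l :=
  poisson_difference_first_inv_moment_general μ hμ n
end

section
/- The coefficients α_{l,j} defined by (Σ_{k=2}^∞ x^k/k)^j = Σ_{l≥0} α_{l,j} x^{2j+l} satisfy α_{l,1} = 1/(l+2) and α_{l,2} = 2(H_{l+2} - 1)/(l+4), where H_n = Σ_{i=1}^n 1/i is the n-th harmonic number. -/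
/-- The formal power series `Σ_{k=2}^∞ x^k/k = -log(1-x) - x`. -/
noncomputable def fseries : PowerSeries ℝ :=
  PowerSeries.mk fun k => if 2 ≤ k then 1 / (k : ℝ) else 0

/-- The coefficients `α_{l,j}` defined by `f(x)^j = Σ_{l≥0} α_{l,j} x^{2j+l}`. -/
noncomputable def alphaCoeff (l j : ℕ) : ℝ :=
  PowerSeries.coeff (R := ℝ) (2 * j + l) (fseries ^ j)

/-!
The coefficient of `x^n` in `f(x)^2` is `Σ_{i=2}^{n-2} 1/(i(n-i))`. The partial fraction
decomposition `1/(i(n-i)) = (1/i + 1/(n-i))/n` and the symmetry `i ↦ n - i` of the range of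
summation turn it into `(2/n) Σ_{i=2}^{n-2} 1/i = 2(H_{n-2} - 1)/n`.
-/

open Finset PowerSeries

theorem Finset.sum_Icc_comp_sub_self {M : Type*} [AddCommMonoid M] (f : ℕ → M) (a n : ℕ) :
    ∑ i ∈ Icc a (n - a), f (n - i) = ∑ i ∈ Icc a (n - a), f i := by
  refine sum_nbij' (n - ·) (n - ·) ?_ ?_ ?_ ?_ fun _ _ => rfl <;>
    intro i hi <;> simp only [mem_Icc] at hi ⊢ <;> omega

theorem sum_Icc_one_div_mul_sub (a n : ℕ) (ha : 1 ≤ a) :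
    ∑ i ∈ Icc a (n - a), 1 / ((i : ℝ) * (n - i : ℕ)) =
      2 / n * ∑ i ∈ Icc a (n - a), 1 / (i : ℝ) := by
  have partial_fractions : ∀ i ∈ Icc a (n - a),
      1 / ((i : ℝ) * (n - i : ℕ)) = (1 / (i : ℝ) + 1 / (n - i : ℕ)) / n := by
    intro i hi
    rw [mem_Icc] at hi
    have hi0 : (i : ℝ) ≠ 0 := by norm_cast; omega
    have hj0 : ((n - i : ℕ) : ℝ) ≠ 0 := by norm_cast; omega
    have hn : (n : ℝ) = i + (n - i : ℕ) := by norm_cast; omega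
    rw [hn]
    field_simp
    ring
  rw [sum_congr rfl partial_fractions, ← sum_div, sum_add_distrib,
    sum_Icc_comp_sub_self (fun k => 1 / (k : ℝ))]
  ring

theorem coeff_fseries (k : ℕ) : coeff k fseries = if 2 ≤ k then 1 / (k : ℝ) else 0 :=
  coeff_mk _ _

theorem coeff_fseries_sq (n : ℕ) :
    coeff n (fseries ^ 2) = ∑ i ∈ Icc 2 (n - 2), 1 / ((i : ℝ) * (n - i : ℕ)) := by
  have hsub : Icc 2 (n - 2) ⊆ range (n + 1) := by
    intro i hi
    simp only [mem_Icc, mem_range] at hi ⊢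
    omega
  rw [pow_two, coeff_mul,
    Nat.sum_antidiagonal_eq_sum_range_succ (fun i j => coeff i fseries * coeff j fseries),
    ← sum_subset hsub]
  · refine sum_congr rfl fun i hi => ?_
    rw [mem_Icc] at hi
    rw [coeff_fseries, coeff_fseries, if_pos hi.1, if_pos (by omega), one_div_mul_one_div]
  · intro i _ hi
    rw [mem_Icc, not_and_or] at hi
    rcases hi with hi | hi
    · rw [coeff_fseries, if_neg hi, zero_mul]
    · rw [coeff_fseries (n - i), if_neg (by omega), mul_zero]

/-- `α_{l,1} = 1/(l+2)` and `α_{l,2} = 2(H_{l+2} - 1)/(l+4)`, where `H_n` is the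
`n`-th harmonic number. -/
theorem alphaCoeff_explicit (l : ℕ) :
    alphaCoeff l 1 = 1 / ((l : ℝ) + 2) ∧
    alphaCoeff l 2 =
      2 * ((∑ i ∈ Finset.Icc 1 (l + 2), (1 : ℝ) / (i : ℝ)) - 1) / ((l : ℝ) + 4) := by
  constructor
  · rw [alphaCoeff, pow_one, coeff_fseries, if_pos (by omega)]
    push_cast
    ring
  · have harmonic_split :
        ∑ i ∈ Icc 1 (l + 2), 1 / (i : ℝ) = 1 + ∑ i ∈ Icc 2 (l + 2), 1 / (i : ℝ) := by
      rw [← add_sum_Ioc_eq_sum_Icc (by omega), ← Icc_add_one_left_eq_Ioc, Nat.cast_one, div_one]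
      rfl
    rw [alphaCoeff, show 2 * 2 + l = l + 4 by ring, coeff_fseries_sq,
      sum_Icc_one_div_mul_sub 2 (l + 4) one_le_two, harmonic_split]
    push_cast
    ring
end
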